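/- Let ρ be a normalized proximate order function with limit ρ₀ > 0, σ ≥ 0, and let f(z) = Σ_{ℓ≥0} a_ℓ z^ℓ be entire on ℂ satisfying: for every ε > 0 there exists D_ε with |f(z)| ≤ D_ε·exp((σ+ε)|z|^{ρ(|z|)}) for all z. Then for every ε > 0 the partial sums Σ_{ℓ≤N} a_ℓ z^ℓ converge to f in the norm ‖g‖_{ρ,σ+ε} = sup_z |g(z)|·exp(−(σ+ε)|z|^{ρ(|z|)}); equivalently Σ_{ℓ=0}^∞ ‖a_ℓ z^ℓ‖_{ρ,σ+ε} < ∞. -/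

import Mathlib

/-!
Cauchy's estimate on the circle of radius `q * r` bounds `‖a ℓ‖ * r ^ ℓ` by
`D * exp ((σ + ε / 2) * (q r) ^ ρ (q r)) * q⁻¹ ^ ℓ`. For a proximate order,
`(q r) ^ ρ (q r) / r ^ ρ r → q ^ ρ₀`: by the mean value theorem, `ρ' r * r * log r → 0` makes
`(ρ (q r) - ρ r) * log r` vanish at infinity. So for `q > 1` close to `1` this exponent is
eventually below `(σ + ε) * r ^ ρ r`, every term `a ℓ z ^ ℓ` has weighted sup norm `O(q⁻¹ ^ ℓ)`,
and the Taylor series converges geometrically in the weighted norm.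
-/

open Filter Real Topology Set FormalMultilinearSeries

section EntireSeries

variable {f : ℂ → ℂ} {a : ℕ → ℂ}

lemma hasFPowerSeriesOnBall_ofScalars_of_forall_hasSum
    (hsum : ∀ z : ℂ, HasSum (fun ℓ ↦ a ℓ * z ^ ℓ) (f z)) :
    HasFPowerSeriesOnBall f (ofScalars ℂ a) 0 ⊤ where
  r_le := by
    refine le_of_eq (ENNReal.eq_top_of_forall_nnreal_le fun s ↦
      (ofScalars ℂ a).le_radius_of_tendsto (l := 0) ?_).symm
    simpa [ofScalars_norm] using (hsum (s : ℂ)).summable.tendsto_atTop_zero.norm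
  r_pos := ENNReal.zero_lt_top
  hasSum {y} _ := by simpa [ofScalars_apply_eq, mul_comm] using hsum y

lemma eq_iteratedDeriv_div_factorial_of_forall_hasSum
    (hsum : ∀ z : ℂ, HasSum (fun ℓ ↦ a ℓ * z ^ ℓ) (f z)) (ℓ : ℕ) :
    a ℓ = iteratedDeriv ℓ f 0 / ℓ.factorial := by
  have hp := (hasFPowerSeriesOnBall_ofScalars_of_forall_hasSum hsum).hasFPowerSeriesAt
  exact congrFun ((ofScalars_series_eq_iff _ _ _).1
    (hp.eq_formalMultilinearSeries hp.analyticAt.hasFPowerSeriesAt)) ℓ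

lemma differentiable_of_forall_hasSum
    (hsum : ∀ z : ℂ, HasSum (fun ℓ ↦ a ℓ * z ^ ℓ) (f z)) : Differentiable ℂ f := fun z ↦
  ((hasFPowerSeriesOnBall_ofScalars_of_forall_hasSum hsum).analyticAt_of_mem
    (by simp)).differentiableAt

lemma norm_mul_pow_le_of_forall_hasSum
    (hsum : ∀ z : ℂ, HasSum (fun ℓ ↦ a ℓ * z ^ ℓ) (f z)) {r B : ℝ} (hr : 0 < r)
    (hB : ∀ z : ℂ, ‖z‖ = r → ‖f z‖ ≤ B) (ℓ : ℕ) :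
    ‖a ℓ‖ * r ^ ℓ ≤ B := by
  have hcauchy := Complex.norm_iteratedDeriv_le_of_forall_mem_sphere_norm_le ℓ hr
    (differentiable_of_forall_hasSum hsum).diffContOnCl (c := 0)
    fun z hz ↦ hB z (by simpa using hz)
  rw [eq_iteratedDeriv_div_factorial_of_forall_hasSum hsum ℓ, norm_div, Complex.norm_natCast,
    div_mul_eq_mul_div, div_le_iff₀ (by positivity), ← le_div_iff₀ (by positivity), mul_comm B]
  exact hcauchy

end EntireSeries

section ProximateOrder

variable {ρ : ℝ → ℝ}

lemma tendsto_sub_mul_log_of_tendsto_deriv_mul_mul_log (hdiff : Differentiable ℝ ρ)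
    (hder : Tendsto (fun r ↦ deriv ρ r * r * log r) atTop (𝓝 0)) {q : ℝ} (hq : 1 < q) :
    Tendsto (fun t ↦ (ρ (q * t) - ρ t) * log t) atTop (𝓝 0) := by
  have hmvt : ∀ t > 0, ∃ ξ ∈ Ioo t (q * t), deriv ρ ξ = (ρ (q * t) - ρ t) / (q * t - t) :=
    fun t ht ↦ exists_deriv_eq_slope ρ (by nlinarith) hdiff.continuous.continuousOn
      hdiff.differentiableOn
  choose! ξ hξ hslope using hmvt
  have hξ_atTop : Tendsto ξ atTop atTop :=
    tendsto_atTop_mono' _ (eventually_gt_atTop 0 |>.mono fun t ht ↦ (hξ t ht).1.le) tendsto_id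
  have hbound := ((hder.comp hξ_atTop).norm.const_mul (q - 1))
  rw [norm_zero, mul_zero] at hbound
  refine squeeze_zero_norm' ?_ hbound
  filter_upwards [eventually_ge_atTop 1] with t ht
  obtain ⟨htξ, -⟩ := hξ t (by linarith)
  have hΔ : ρ (q * t) - ρ t = deriv ρ (ξ t) * (q - 1) * t := by
    linear_combination -(eq_div_iff (by nlinarith)).1 (hslope t (by linarith))
  have hlog : 0 ≤ log t := log_nonneg ht
  calc ‖(ρ (q * t) - ρ t) * log t‖ = (q - 1) * (|deriv ρ (ξ t)| * (t * log t)) := by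
        simp only [hΔ, Real.norm_eq_abs, abs_mul, abs_of_nonneg hlog,
          abs_of_nonneg (by linarith : 0 ≤ q - 1), abs_of_nonneg (by linarith : 0 ≤ t)]
        ring
    _ ≤ (q - 1) * (|deriv ρ (ξ t)| * (ξ t * log (ξ t))) := by
        gcongr
        linarith
    _ = (q - 1) * ‖deriv ρ (ξ t) * ξ t * log (ξ t)‖ := by
        simp only [Real.norm_eq_abs, abs_mul,
          abs_of_nonneg (by linarith : 0 ≤ ξ t), abs_of_nonneg (log_nonneg (by linarith : 1 ≤ ξ t))]
        ring

lemma exists_one_lt_eventually_rpow_le {ρ₀ : ℝ} (hdiff : Differentiable ℝ ρ)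
    (hlim : Tendsto ρ atTop (𝓝 ρ₀))
    (hder : Tendsto (fun r ↦ deriv ρ r * r * log r) atTop (𝓝 0)) {K : ℝ} (hK : 1 < K) :
    ∃ q > 1, ∀ᶠ t in atTop, (q * t) ^ ρ (q * t) ≤ K * t ^ ρ t := by
  have hlog_near_one : Tendsto (fun q ↦ ρ₀ * log q) (𝓝[>] 1) (𝓝 0) := by
    simpa using ((continuousAt_log one_ne_zero).tendsto.const_mul ρ₀).mono_left
      nhdsWithin_le_nhds
  obtain ⟨q, hqK, hq⟩ :=
    ((hlog_near_one.eventually (gt_mem_nhds (log_pos hK))).and self_mem_nhdsWithin).exists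
  refine ⟨q, hq, ?_⟩
  have hq_atTop : Tendsto (fun t ↦ q * t) atTop atTop :=
    tendsto_id.const_mul_atTop (zero_lt_one.trans hq)
  have hdiff_log : Tendsto (fun t ↦ (ρ (q * t) - ρ t) * log t + ρ (q * t) * log q) atTop
      (𝓝 (ρ₀ * log q)) := by
    simpa using (tendsto_sub_mul_log_of_tendsto_deriv_mul_mul_log hdiff hder hq).add
      ((hlim.comp hq_atTop).mul_const (log q))
  filter_upwards [hdiff_log.eventually (gt_mem_nhds hqK), eventually_gt_atTop 0] with t ht ht0
  have hqt : 0 < q * t := by nlinarith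
  rw [rpow_def_of_pos hqt, rpow_def_of_pos ht0, ← exp_log (zero_lt_one.trans hK), ← exp_add,
    exp_le_exp, log_mul (by linarith) ht0.ne']
  linarith

end ProximateOrder

lemma exists_mul_pow_mul_le_geometric {A : ℕ → ℝ} {M w : ℝ → ℝ} {q K : ℝ} (hq : 1 < q)
    (hA : ∀ ℓ, 0 ≤ A ℓ) (hAM : ∀ ℓ, ∀ r > 0, A ℓ * r ^ ℓ ≤ M r)
    (hw : ∀ t ≥ 0, 0 ≤ w t ∧ w t ≤ 1) (hMw : ∀ᶠ t in atTop, M (q * t) * w t ≤ K) :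
    ∃ C, ∀ ℓ, ∀ t ≥ 0, A ℓ * t ^ ℓ * w t ≤ C * q⁻¹ ^ ℓ := by
  obtain ⟨T, hT⟩ := (hMw.and (eventually_gt_atTop 0)).exists_forall_of_atTop
  have hq0 : 0 < q := zero_lt_one.trans hq
  have hscale : ∀ ℓ t, A ℓ * t ^ ℓ = A ℓ * (q * t) ^ ℓ * q⁻¹ ^ ℓ := fun ℓ t ↦ by
    rw [mul_assoc, ← mul_pow, mul_comm q, mul_assoc, mul_inv_cancel₀ hq0.ne', mul_one]
  refine ⟨max (M (q * T)) K, fun ℓ t ht ↦ ?_⟩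
  obtain ⟨hw0, hw1⟩ := hw t ht
  obtain ⟨-, hT0⟩ := hT T le_rfl
  rcases le_total t T with htT | hTt
  · calc A ℓ * t ^ ℓ * w t ≤ A ℓ * T ^ ℓ := by
          refine (mul_le_of_le_one_right (mul_nonneg (hA ℓ) (pow_nonneg ht ℓ)) hw1).trans ?_
          gcongr
          exact hA ℓ
      _ ≤ M (q * T) * q⁻¹ ^ ℓ := by
          rw [hscale]
          gcongr
          exact hAM ℓ _ (by positivity)
      _ ≤ max (M (q * T)) K * q⁻¹ ^ ℓ := by gcongr; exact le_max_left _ _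
  · obtain ⟨hMwt, ht0⟩ := hT t hTt
    calc A ℓ * t ^ ℓ * w t ≤ M (q * t) * w t * q⁻¹ ^ ℓ := by
          rw [hscale, mul_right_comm]
          gcongr
          exact hAM ℓ _ (by positivity)
      _ ≤ max (M (q * T)) K * q⁻¹ ^ ℓ := by gcongr; exact hMwt.trans (le_max_right _ _)

section WeightedSeries

variable {X E : Type*} [NormedAddCommGroup E] [NormedSpace ℝ E] {g : ℕ → X → E} {w : X → ℝ}
  {C q : ℝ}

lemma summable_iSup_of_le_geometric [Nonempty X] {u : ℕ → X → ℝ} (hu : ∀ ℓ x, 0 ≤ u ℓ x)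
    (hq0 : 0 ≤ q) (hq1 : q < 1) (hC : ∀ ℓ x, u ℓ x ≤ C * q ^ ℓ) :
    Summable fun ℓ ↦ ⨆ x, u ℓ x :=
  .of_nonneg_of_le (fun ℓ ↦ Real.iSup_nonneg (hu ℓ)) (fun ℓ ↦ ciSup_le (hC ℓ))
    ((summable_geometric_of_lt_one hq0 hq1).mul_left C)

lemma norm_sub_sum_range_mul_le_of_le_geometric {f : X → E}
    (hsum : ∀ x, HasSum (fun ℓ ↦ g ℓ x) (f x)) (hw : ∀ x, 0 ≤ w x) (hq0 : 0 ≤ q) (hq1 : q < 1)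
    (hg : ∀ ℓ x, ‖g ℓ x‖ * w x ≤ C * q ^ ℓ) (N : ℕ) (x : X) :
    ‖f x - ∑ ℓ ∈ Finset.range N, g ℓ x‖ * w x ≤ C * q ^ N * (1 - q)⁻¹ := by
  have htail := ((hasSum_nat_add_iff' N).2 (hsum x)).const_smul (w x)
  have hgeom := (hasSum_geometric_of_lt_one hq0 hq1).mul_left (C * q ^ N)
  rw [mul_comm, ← Real.norm_of_nonneg (hw x), ← norm_smul]
  refine htail.norm_le_of_bounded hgeom fun i ↦ ?_
  rw [norm_smul, Real.norm_of_nonneg (hw x), mul_comm, mul_assoc, ← pow_add, add_comm]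
  exact hg _ _

lemma tendsto_iSup_norm_sub_sum_range_of_le_geometric [Nonempty X] {f : X → E}
    (hsum : ∀ x, HasSum (fun ℓ ↦ g ℓ x) (f x)) (hw : ∀ x, 0 ≤ w x) (hq0 : 0 ≤ q) (hq1 : q < 1)
    (hg : ∀ ℓ x, ‖g ℓ x‖ * w x ≤ C * q ^ ℓ) :
    Tendsto (fun N ↦ ⨆ x, ‖f x - ∑ ℓ ∈ Finset.range N, g ℓ x‖ * w x) atTop (𝓝 0) := by
  have hbound := ((tendsto_pow_atTop_nhds_zero_of_lt_one hq0 hq1).const_mul C).mul_const (1 - q)⁻¹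
  rw [mul_zero, zero_mul] at hbound
  refine squeeze_zero (fun N ↦ Real.iSup_nonneg fun x ↦ mul_nonneg (norm_nonneg _) (hw x))
    (fun N ↦ ciSup_le (norm_sub_sum_range_mul_le_of_le_geometric hsum hw hq0 hq1 hg N)) hbound

end WeightedSeries

theorem stmt_17_general (ρ : ℝ → ℝ) (ρ₀ : ℝ)
    (hdiff : Differentiable ℝ ρ)
    (hlim : Filter.Tendsto ρ Filter.atTop (nhds ρ₀))
    (hder : Filter.Tendsto (fun r => deriv ρ r * r * Real.log r) Filter.atTop (nhds 0))
    (σ : ℝ) (hσ : 0 ≤ σ)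
    (f : ℂ → ℂ) (a : ℕ → ℂ)
    (hsum : ∀ z : ℂ, HasSum (fun ℓ : ℕ => a ℓ * z ^ ℓ) (f z))
    (hbound : ∀ ε > (0:ℝ), ∃ D > (0:ℝ), ∀ z : ℂ,
      ‖f z‖ ≤ D * Real.exp ((σ + ε) * ‖z‖ ^ ρ (‖z‖))) :
    ∀ ε > (0:ℝ),
      Summable (fun ℓ : ℕ => ⨆ z : ℂ,
        ‖a ℓ‖ * ‖z‖ ^ ℓ
          * Real.exp (-(σ + ε) * ‖z‖ ^ ρ (‖z‖))) ∧
      Filter.Tendsto (fun N : ℕ => ⨆ z : ℂ,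
          ‖f z - ∑ ℓ ∈ Finset.range N, a ℓ * z ^ ℓ‖
            * Real.exp (-(σ + ε) * ‖z‖ ^ ρ (‖z‖)))
        Filter.atTop (nhds 0) := by
  intro ε hε
  obtain ⟨D, hD, hfD⟩ := hbound (ε / 2) (by positivity)
  have hσε : 0 < σ + ε / 2 := by positivity
  obtain ⟨q, hq, hgrowth⟩ := exists_one_lt_eventually_rpow_le hdiff hlim hder
    ((one_lt_div hσε).2 (by linarith : σ + ε / 2 < σ + ε))
  have hweight : ∀ t ≥ (0 : ℝ), 0 ≤ exp (-(σ + ε) * t ^ ρ t) ∧ exp (-(σ + ε) * t ^ ρ t) ≤ 1 :=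
    fun t ht ↦ ⟨(exp_pos _).le, exp_le_one_iff.2 (by nlinarith [rpow_nonneg ht (ρ t)])⟩
  have hcancel : ∀ᶠ t in atTop, D * exp ((σ + ε / 2) * (q * t) ^ ρ (q * t))
      * exp (-(σ + ε) * t ^ ρ t) ≤ D := by
    filter_upwards [hgrowth] with t ht
    rw [div_mul_eq_mul_div, le_div_iff₀ hσε] at ht
    rw [mul_assoc, ← exp_add]
    exact mul_le_of_le_one_right hD.le (exp_le_one_iff.2 (by linarith))
  obtain ⟨C, hC⟩ := exists_mul_pow_mul_le_geometric hq (fun ℓ ↦ norm_nonneg (a ℓ))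
    (fun ℓ r hr ↦ norm_mul_pow_le_of_forall_hasSum hsum hr (fun z hz ↦ hz ▸ hfD z) ℓ)
    hweight hcancel
  have hq0 : 0 ≤ q⁻¹ := by positivity
  have hq1 : q⁻¹ < 1 := inv_lt_one_of_one_lt₀ hq
  have hterm : ∀ ℓ (z : ℂ), ‖a ℓ * z ^ ℓ‖ * exp (-(σ + ε) * ‖z‖ ^ ρ ‖z‖) ≤ C * q⁻¹ ^ ℓ :=
    fun ℓ z ↦ by simpa only [norm_mul, norm_pow] using hC ℓ ‖z‖ (norm_nonneg z)
  exact ⟨summable_iSup_of_le_geometric (fun ℓ z ↦ by positivity) hq0 hq1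
      fun ℓ z ↦ hC ℓ ‖z‖ (norm_nonneg z),
    tendsto_iSup_norm_sub_sum_range_of_le_geometric hsum (fun z ↦ (exp_pos _).le) hq0 hq1 hterm⟩

/-- Proposition 3.14 (complex version): the Taylor series of f ∈ A_{ρ,σ+0}
converges to f in every norm ‖·‖_{ρ,σ+ε}; in particular Σ‖a_ℓ z^ℓ‖_{ρ,σ+ε} < ∞. -/
theorem stmt_17 (ρ : ℝ → ℝ) (ρ₀ : ℝ) (hρ₀ : 0 < ρ₀)
    (hdiff : Differentiable ℝ ρ)
    (hpos : ∀ r, 0 ≤ r → 0 ≤ ρ r)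
    (hlim : Filter.Tendsto ρ Filter.atTop (nhds ρ₀))
    (hder : Filter.Tendsto (fun r => deriv ρ r * r * Real.log r) Filter.atTop (nhds 0))
    (hmono : StrictMonoOn (fun r => r ^ ρ r) (Set.Ioi (0:ℝ)))
    (hzero : Filter.Tendsto (fun r => r ^ ρ r) (nhdsWithin 0 (Set.Ioi 0)) (nhds 0))
    (σ : ℝ) (hσ : 0 ≤ σ)
    (f : ℂ → ℂ) (a : ℕ → ℂ)
    (hsum : ∀ z : ℂ, HasSum (fun ℓ : ℕ => a ℓ * z ^ ℓ) (f z))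
    (hbound : ∀ ε > (0:ℝ), ∃ D > (0:ℝ), ∀ z : ℂ,
      ‖f z‖ ≤ D * Real.exp ((σ + ε) * ‖z‖ ^ ρ (‖z‖))) :
    ∀ ε > (0:ℝ),
      Summable (fun ℓ : ℕ => ⨆ z : ℂ,
        ‖a ℓ‖ * ‖z‖ ^ ℓ
          * Real.exp (-(σ + ε) * ‖z‖ ^ ρ (‖z‖))) ∧
      Filter.Tendsto (fun N : ℕ => ⨆ z : ℂ,
          ‖f z - ∑ ℓ ∈ Finset.range N, a ℓ * z ^ ℓ‖
            * Real.exp (-(σ + ε) * ‖z‖ ^ ρ (‖z‖)))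
        Filter.atTop (nhds 0) :=
  stmt_17_general ρ ρ₀ hdiff hlim hder σ hσ f a hsum hbound
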